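/- Let f : {−1,1}^k → {0,1} be a Boolean function that is not identically zero, and let Ψ be an instance of Max-CSP(f). Then val_Ψ ≥ ρ(f) + B_λ(Ψ)·δ(Ψ), where λ = (f̂({1}),…,f̂({k})) and δ(Ψ) = min{1/(3k), 2·B_λ(Ψ)/(9·ρ(f)·k²)}. -/

import Mathlib

/-- Encoding of {-1,1}: `true ↦ 1`, `false ↦ -1`. -/
def pm (b : Bool) : ℝ := if b then 1 else -1

/-- ρ(f) = 2^{-k}·Σ_x f(x). -/
noncomputable def rho (k : ℕ) (f : (Fin k → Bool) → ℝ) : ℝ :=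
  (∑ x, f x) / 2 ^ k

/-- The Chow parameter (degree-1 Fourier coefficient) f̂({i}) = 2^{-k}·Σ_x f(x)·x_i. -/
noncomputable def chow (k : ℕ) (f : (Fin k → Bool) → ℝ) (i : Fin k) : ℝ :=
  (∑ x, f x * pm (x i)) / 2 ^ k

/-- The value of an assignment `σ` on the Max-CSP(f) instance given by
constraints `(jj i, b i)` with weights `w i`. -/
noncomputable def valCSP (k n m : ℕ) (f : (Fin k → Bool) → ℝ)
    (jj : Fin m → Fin k → Fin n) (b : Fin m → Fin k → Bool) (w : Fin m → ℝ)
    (σ : Fin n → Bool) : ℝ :=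
  (1 / (∑ i, w i)) * ∑ i, w i * f (fun t => b i t == σ (jj i t))

/-- The λ-bias B_λ(Ψ) for λ the vector of Chow parameters of f:
Σ_ℓ |(1/W)·Σ_{i,t : j(i)_t = ℓ} λ_t·w_i·b(i)_t|. -/
noncomputable def biasB (k n m : ℕ) (f : (Fin k → Bool) → ℝ)
    (jj : Fin m → Fin k → Fin n) (b : Fin m → Fin k → Bool) (w : Fin m → ℝ) : ℝ :=
  ∑ ℓ : Fin n,
    |(1 / (∑ i, w i)) *
      ∑ i, ∑ t, (if jj i t = ℓ then chow k f t * w i * pm (b i t) else 0)|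

/-!
Round the variables independently at random, `σ ℓ = true` with probability `(1 + e ℓ) / 2`,
where `e ℓ = ε · sign (bias_λ(Ψ)_ℓ)` (`biasVec`) and `ε = 2δ`. Expanding `f` in the Fourier
basis, the expected value of the instance is `∑_S f̂(S) · M(S)`, where `M(S)`
(`literalMoment`) is the weighted average over the constraints of `∏_{t ∈ S} b_t · e_{j_t}`
(this uses that the variables of a constraint are distinct). The terms with `|S| ≤ 1` give
exactly `ρ(f) + ε · B_λ(Ψ)`. Since `f ≥ 0` gives `|f̂(S)| ≤ ρ(f)`, and `|M(S)| ≤ ε^|S|`, the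
other terms lose at most `ρ(f) ((1 + ε)^k - 1 - kε) ≤ ρ(f) (kε)²`, which the choice of `δ`
keeps below `δ · B_λ(Ψ)`. Some assignment is at least as good as the expectation.
-/

open Finset

lemma pm_mul_self (b : Bool) : pm b * pm b = 1 := by cases b <;> simp [pm]

lemma abs_pm (b : Bool) : |pm b| = 1 := by cases b <;> simp [pm]

lemma pm_beq (a c : Bool) : pm (a == c) = pm a * pm c := by
  cases a <;> cases c <;> simp [pm]

section Fourier

variable {k : ℕ}

noncomputable def chi (S : Finset (Fin k)) (y : Fin k → Bool) : ℝ :=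
  ∏ t ∈ S, pm (y t)

noncomputable def fhat (f : (Fin k → Bool) → ℝ) (S : Finset (Fin k)) : ℝ :=
  (∑ x, f x * chi S x) / 2 ^ k

lemma abs_chi (S : Finset (Fin k)) (y : Fin k → Bool) : |chi S y| = 1 := by
  rw [chi, abs_prod]
  exact prod_eq_one fun t _ => abs_pm (y t)

lemma sum_chi_mul_chi (x y : Fin k → Bool) :
    ∑ S, chi S x * chi S y = if x = y then 2 ^ k else 0 := by
  have hprod : ∑ S, chi S x * chi S y = ∏ t, (1 + pm (x t) * pm (y t)) := by
    rw [prod_one_add, powerset_univ]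
    simp only [chi, prod_mul_distrib]
  rw [hprod]
  split_ifs with hxy
  · subst hxy
    simp [pm_mul_self, one_add_one_eq_two]
  · obtain ⟨t, ht⟩ : ∃ t, x t ≠ y t := Function.ne_iff.mp hxy
    refine prod_eq_zero (mem_univ t) ?_
    cases hx : x t <;> cases hy : y t <;> simp_all [pm]

lemma sum_fhat_mul_chi (f : (Fin k → Bool) → ℝ) (y : Fin k → Bool) :
    ∑ S, fhat f S * chi S y = f y := by
  calc ∑ S, fhat f S * chi S y
      = ∑ x, f x * (∑ S, chi S x * chi S y) / 2 ^ k := by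
        simp only [fhat, div_mul_eq_mul_div, sum_mul, mul_sum, ← sum_div]
        rw [sum_comm]
        simp only [mul_assoc]
    _ = f y := by simp [sum_chi_mul_chi, ite_div]

lemma fhat_empty (f : (Fin k → Bool) → ℝ) : fhat f ∅ = rho k f := by
  simp [fhat, chi, rho]

lemma fhat_singleton (f : (Fin k → Bool) → ℝ) (t : Fin k) : fhat f {t} = chow k f t := by
  simp [fhat, chi, chow]

lemma rho_nonneg {f : (Fin k → Bool) → ℝ} (hf : ∀ x, 0 ≤ f x) : 0 ≤ rho k f :=
  div_nonneg (sum_nonneg fun x _ => hf x) (by positivity)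

lemma abs_fhat_le_rho {f : (Fin k → Bool) → ℝ} (hf : ∀ x, 0 ≤ f x) (S : Finset (Fin k)) :
    |fhat f S| ≤ rho k f := by
  rw [fhat, rho, abs_div, abs_of_pos (by positivity : (0 : ℝ) < 2 ^ k)]
  gcongr
  calc |∑ x, f x * chi S x| ≤ ∑ x, |f x * chi S x| := abs_sum_le_sum_abs _ _
    _ = ∑ x, f x := by simp only [abs_mul, abs_chi, mul_one, abs_of_nonneg (hf _)]

end Fourier

section BiasedMeasure

variable {ι : Type*} [Fintype ι]

noncomputable def biasedMeasure (e : ι → ℝ) (σ : ι → Bool) : ℝ :=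
  ∏ ℓ, (1 + pm (σ ℓ) * e ℓ) / 2

lemma biasedMeasure_nonneg {e : ι → ℝ} (he : ∀ ℓ, |e ℓ| ≤ 1) (σ : ι → Bool) :
    0 ≤ biasedMeasure e σ := by
  refine prod_nonneg fun ℓ _ => ?_
  have := abs_le.mp (he ℓ)
  cases σ ℓ <;> norm_num [pm] <;> linarith

variable [DecidableEq ι]

lemma sum_biasedMeasure_mul_prod_pm (e : ι → ℝ) (T : Finset ι) :
    ∑ σ, biasedMeasure e σ * ∏ ℓ ∈ T, pm (σ ℓ) = ∏ ℓ ∈ T, e ℓ := by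
  have hsplit : ∀ σ : ι → Bool, biasedMeasure e σ * ∏ ℓ ∈ T, pm (σ ℓ)
      = ∏ ℓ, (1 + pm (σ ℓ) * e ℓ) / 2 * (if ℓ ∈ T then pm (σ ℓ) else 1) := by
    intro σ
    rw [biasedMeasure, prod_mul_distrib, prod_ite_mem, univ_inter]
  have hcoord : ∀ ℓ, ∑ c : Bool, (1 + pm c * e ℓ) / 2 * (if ℓ ∈ T then pm c else 1)
      = if ℓ ∈ T then e ℓ else 1 := by
    intro ℓ
    split_ifs <;> simp [pm] <;> ring
  simp only [hsplit]
  rw [← Fintype.prod_sum fun ℓ (c : Bool) => (1 + pm c * e ℓ) / 2 * if ℓ ∈ T then pm c else 1]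
  simp only [hcoord, prod_ite_mem, univ_inter]

lemma sum_biasedMeasure (e : ι → ℝ) : ∑ σ, biasedMeasure e σ = 1 := by
  simpa using sum_biasedMeasure_mul_prod_pm e ∅

lemma exists_sum_biasedMeasure_mul_le {e : ι → ℝ} (he : ∀ ℓ, |e ℓ| ≤ 1) (g : (ι → Bool) → ℝ) :
    ∃ σ, ∑ τ, biasedMeasure e τ * g τ ≤ g σ := by
  obtain ⟨σ, -, hσ⟩ := exists_max_image univ g univ_nonempty
  refine ⟨σ, ?_⟩
  calc ∑ τ, biasedMeasure e τ * g τ ≤ ∑ τ, biasedMeasure e τ * g σ :=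
        sum_le_sum fun τ hτ => mul_le_mul_of_nonneg_left (hσ τ hτ) (biasedMeasure_nonneg he τ)
    _ = g σ := by rw [← sum_mul, sum_biasedMeasure, one_mul]

end BiasedMeasure

lemma sum_filter_card_le_one {α M : Type*} [Fintype α] [DecidableEq α] [AddCommMonoid M]
    (g : Finset α → M) : ∑ S with S.card ≤ 1, g S = g ∅ + ∑ a, g {a} := by
  have hset : ({S | S.card ≤ 1} : Finset (Finset α))
      = insert ∅ (univ.map ⟨_, singleton_injective⟩) := by
    ext S
    simp [Nat.le_one_iff_eq_zero_or_eq_one, card_eq_one, eq_comm]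
  rw [hset, sum_insert (by simp), sum_map]
  rfl

lemma sum_filter_not_card_le_one_pow (k : ℕ) (ε : ℝ) :
    ∑ S : Finset (Fin k) with ¬ S.card ≤ 1, ε ^ S.card = (1 + ε) ^ k - 1 - k * ε := by
  have htotal : ∑ S : Finset (Fin k), ε ^ S.card = (1 + ε) ^ k := by
    simpa [add_comm] using Fintype.sum_pow_mul_eq_add_pow (Fin k) ε 1
  rw [← htotal, ← sum_filter_add_sum_filter_not univ (fun S : Finset (Fin k) => S.card ≤ 1),
    sum_filter_card_le_one]
  simp only [card_empty, pow_zero, card_singleton, pow_one, sum_const, card_univ,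
    Fintype.card_fin, nsmul_eq_mul]
  ring

lemma one_add_pow_sub_one_sub_mul_le (k : ℕ) {ε : ℝ} (hε : 0 ≤ ε) (hkε : k * ε ≤ 1) :
    (1 + ε) ^ k - 1 - k * ε ≤ (k * ε) ^ 2 := by
  have hexp : (1 + ε) ^ k ≤ Real.exp (k * ε) := by
    rw [Real.exp_nat_mul]
    exact pow_le_pow_left₀ (by linarith) (by linarith [Real.add_one_le_exp ε]) k
  have hquad := (abs_le.mp (Real.abs_exp_sub_one_sub_id_le
    (by rwa [abs_of_nonneg (by positivity)] : |(k : ℝ) * ε| ≤ 1))).2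
  linarith

lemma sum_biasedMeasure_mul_apply_beq {k : ℕ} {ι : Type*} [Fintype ι] [DecidableEq ι]
    (f : (Fin k → Bool) → ℝ) {j : Fin k → ι} (hj : Function.Injective j)
    (c : Fin k → Bool) (e : ι → ℝ) :
    ∑ σ, biasedMeasure e σ * f (fun t => c t == σ (j t))
      = ∑ S, fhat f S * ∏ t ∈ S, pm (c t) * e (j t) := by
  have hchi : ∀ (σ : ι → Bool) (S : Finset (Fin k)), chi S (fun t => c t == σ (j t))
      = (∏ t ∈ S, pm (c t)) * ∏ ℓ ∈ S.image j, pm (σ ℓ) := fun σ S => by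
    rw [prod_image hj.injOn, chi, ← prod_mul_distrib]
    exact prod_congr rfl fun t _ => pm_beq _ _
  calc ∑ σ, biasedMeasure e σ * f (fun t => c t == σ (j t))
      = ∑ σ, ∑ S, fhat f S * (∏ t ∈ S, pm (c t)) *
          (biasedMeasure e σ * ∏ ℓ ∈ S.image j, pm (σ ℓ)) := by
        refine sum_congr rfl fun σ _ => ?_
        rw [← sum_fhat_mul_chi f, mul_sum]
        exact sum_congr rfl fun S _ => by rw [hchi]; ring
    _ = ∑ S, fhat f S * (∏ t ∈ S, pm (c t)) *
          ∑ σ, biasedMeasure e σ * ∏ ℓ ∈ S.image j, pm (σ ℓ) := by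
        rw [sum_comm]
        simp only [mul_sum]
    _ = ∑ S, fhat f S * ∏ t ∈ S, pm (c t) * e (j t) := by
        refine sum_congr rfl fun S _ => ?_
        rw [sum_biasedMeasure_mul_prod_pm, prod_image hj.injOn, prod_mul_distrib, mul_assoc]

section CSP

variable {k n m : ℕ} (jj : Fin m → Fin k → Fin n) (b : Fin m → Fin k → Bool) (w : Fin m → ℝ)

noncomputable def literalMoment (e : Fin n → ℝ) (S : Finset (Fin k)) : ℝ :=
  (1 / (∑ i, w i)) * ∑ i, w i * ∏ t ∈ S, pm (b i t) * e (jj i t)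

noncomputable def biasVec (f : (Fin k → Bool) → ℝ) (ℓ : Fin n) : ℝ :=
  (1 / (∑ i, w i)) * ∑ i, ∑ t, (if jj i t = ℓ then chow k f t * w i * pm (b i t) else 0)

lemma biasB_eq_sum_abs_biasVec (f : (Fin k → Bool) → ℝ) :
    biasB k n m f jj b w = ∑ ℓ, |biasVec jj b w f ℓ| := rfl

lemma literalMoment_empty (hW : 0 < ∑ i, w i) (e : Fin n → ℝ) :
    literalMoment jj b w e ∅ = 1 := by
  simp [literalMoment, hW.ne']

lemma abs_literalMoment_le (hw : ∀ i, 0 ≤ w i) (hW : 0 < ∑ i, w i) {e : Fin n → ℝ} {ε : ℝ}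
    (he : ∀ ℓ, |e ℓ| ≤ ε) (S : Finset (Fin k)) :
    |literalMoment jj b w e S| ≤ ε ^ S.card := by
  have hterm : ∀ i, |w i * ∏ t ∈ S, pm (b i t) * e (jj i t)| ≤ w i * ε ^ S.card := fun i => by
    rw [abs_mul, abs_of_nonneg (hw i), abs_prod, ← prod_const]
    gcongr with t
    · exact hw i
    · rw [abs_mul, abs_pm, one_mul]; exact he _
  calc |literalMoment jj b w e S|
      ≤ (1 / ∑ i, w i) * ∑ i, w i * ε ^ S.card := by
        rw [literalMoment, abs_mul, abs_of_pos (by positivity)]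
        gcongr
        exact (abs_sum_le_sum_abs _ _).trans (sum_le_sum fun i _ => hterm i)
    _ = ε ^ S.card := by rw [← sum_mul, ← mul_assoc, one_div_mul_cancel hW.ne', one_mul]

lemma sum_fhat_singleton_mul_literalMoment (f : (Fin k → Bool) → ℝ) (e : Fin n → ℝ) :
    ∑ t, fhat f {t} * literalMoment jj b w e {t} = ∑ ℓ, e ℓ * biasVec jj b w f ℓ := by
  simp only [fhat_singleton, literalMoment, biasVec, prod_singleton, mul_sum, mul_ite, mul_zero]
  calc ∑ t, ∑ i, chow k f t * ((1 / ∑ i, w i) * (w i * (pm (b i t) * e (jj i t))))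
      = ∑ i, ∑ t, ∑ ℓ, if jj i t = ℓ
          then e ℓ * ((1 / ∑ i, w i) * (chow k f t * w i * pm (b i t))) else 0 := by
        rw [sum_comm]
        simp only [sum_ite_eq, mem_univ, if_true]
        exact sum_congr rfl fun i _ => sum_congr rfl fun t _ => by ring
    _ = ∑ ℓ, ∑ i, ∑ t, if jj i t = ℓ
          then e ℓ * ((1 / ∑ i, w i) * (chow k f t * w i * pm (b i t))) else 0 := by
        simp only [sum_comm (s := (univ : Finset (Fin k))) (t := (univ : Finset (Fin n)))]
        exact sum_comm

variable {jj b w} {f : (Fin k → Bool) → ℝ}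

lemma sum_biasedMeasure_mul_valCSP (hjj : ∀ i, Function.Injective (jj i)) (e : Fin n → ℝ) :
    ∑ σ, biasedMeasure e σ * valCSP k n m f jj b w σ
      = ∑ S, fhat f S * literalMoment jj b w e S := by
  calc ∑ σ, biasedMeasure e σ * valCSP k n m f jj b w σ
      = (1 / ∑ i, w i) * ∑ i, w i *
          ∑ σ, biasedMeasure e σ * f (fun t => b i t == σ (jj i t)) := by
        simp only [valCSP, mul_sum]
        rw [sum_comm]
        exact sum_congr rfl fun i _ => sum_congr rfl fun σ _ => by ring
    _ = ∑ S, fhat f S * literalMoment jj b w e S := by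
        simp only [sum_biasedMeasure_mul_apply_beq f (hjj _), literalMoment, mul_sum]
        rw [sum_comm]
        exact sum_congr rfl fun S _ => sum_congr rfl fun i _ => by ring

lemma le_sum_fhat_mul_literalMoment (hf : ∀ x, 0 ≤ f x)
    (hw : ∀ i, 0 ≤ w i) (hW : 0 < ∑ i, w i) {e : Fin n → ℝ} {ε : ℝ} (he : ∀ ℓ, |e ℓ| ≤ ε) :
    rho k f + ∑ ℓ, e ℓ * biasVec jj b w f ℓ - rho k f * ((1 + ε) ^ k - 1 - k * ε)
      ≤ ∑ S, fhat f S * literalMoment jj b w e S := by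
  have hhigh : |∑ S : Finset (Fin k) with ¬ S.card ≤ 1, fhat f S * literalMoment jj b w e S|
      ≤ rho k f * ((1 + ε) ^ k - 1 - k * ε) := by
    rw [← sum_filter_not_card_le_one_pow, mul_sum]
    refine (abs_sum_le_sum_abs _ _).trans (sum_le_sum fun S _ => ?_)
    rw [abs_mul]
    exact mul_le_mul (abs_fhat_le_rho hf S) (abs_literalMoment_le jj b w hw hW he S)
      (abs_nonneg _) (rho_nonneg hf)
  rw [← sum_filter_add_sum_filter_not univ (fun S : Finset (Fin k) => S.card ≤ 1),
    sum_filter_card_le_one, fhat_empty, literalMoment_empty jj b w hW, mul_one,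
    sum_fhat_singleton_mul_literalMoment]
  linarith [neg_abs_le
    (∑ S : Finset (Fin k) with ¬ S.card ≤ 1, fhat f S * literalMoment jj b w e S)]

theorem exists_valCSP_ge (hf : ∀ x, 0 ≤ f x) (hjj : ∀ i, Function.Injective (jj i))
    (hw : ∀ i, 0 ≤ w i) (hW : 0 < ∑ i, w i) {ε : ℝ} (hε0 : 0 ≤ ε) (hε1 : ε ≤ 1) :
    ∃ σ, rho k f + ε * biasB k n m f jj b w - rho k f * ((1 + ε) ^ k - 1 - k * ε)
      ≤ valCSP k n m f jj b w σ := by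
  set e : Fin n → ℝ := fun ℓ => ε * SignType.sign (biasVec jj b w f ℓ)
  have he : ∀ ℓ, |e ℓ| ≤ ε := fun ℓ => by
    rw [abs_mul, abs_of_nonneg hε0]
    refine mul_le_of_le_one_right hε0 ?_
    rcases lt_trichotomy (biasVec jj b w f ℓ) 0 with h | h | h <;> simp [h]
  obtain ⟨σ, hσ⟩ := exists_sum_biasedMeasure_mul_le (fun ℓ => (he ℓ).trans hε1)
    (valCSP k n m f jj b w)
  refine ⟨σ, le_trans ?_ hσ⟩
  have hsum : ∑ ℓ, e ℓ * biasVec jj b w f ℓ = ε * biasB k n m f jj b w := by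
    simp only [biasB_eq_sum_abs_biasVec, mul_sum, e, mul_assoc, sign_mul_self]
  rw [sum_biasedMeasure_mul_valCSP hjj e, ← hsum]
  exact le_sum_fhat_mul_literalMoment hf hw hW he

end CSP

lemma one_div_three_mul_cast_le (k : ℕ) : 1 / (3 * (k : ℝ)) ≤ 1 / 3 := by
  rcases k.eq_zero_or_pos with rfl | hk
  · norm_num -- `1 / 0 = 0`
  · have hk1 : (1 : ℝ) ≤ k := Nat.one_le_cast.mpr hk
    exact one_div_le_one_div_of_le (by norm_num) (by linarith)

lemma cast_mul_one_div_three_mul_le (k : ℕ) : (k : ℝ) * (1 / (3 * k)) ≤ 1 / 3 := by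
  rcases k.eq_zero_or_pos with rfl | hk
  · norm_num
  · exact le_of_eq (by field_simp)

theorem stmt_14_general (k n m : ℕ)
    (f : (Fin k → Bool) → ℝ) (hf01 : ∀ x, f x = 0 ∨ f x = 1)
    (jj : Fin m → Fin k → Fin n) (hjj : ∀ i, Function.Injective (jj i))
    (b : Fin m → Fin k → Bool) (w : Fin m → ℝ) (hw : ∀ i, 0 ≤ w i)
    (hW : 0 < ∑ i, w i) :
    ∃ σ : Fin n → Bool,
      valCSP k n m f jj b w σ
        ≥ rho k f + biasB k n m f jj b w *
            min (1 / (3 * (k : ℝ)))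
              (2 * biasB k n m f jj b w / (9 * rho k f * (k : ℝ) ^ 2)) := by
  set ρ := rho k f
  set B := biasB k n m f jj b w
  set δ := min (1 / (3 * (k : ℝ))) (2 * B / (9 * ρ * (k : ℝ) ^ 2))
  have hf : ∀ x, 0 ≤ f x := fun x => by rcases hf01 x with h | h <;> simp [h]
  have hρ : 0 ≤ ρ := rho_nonneg hf
  have hB : 0 ≤ B := sum_nonneg fun ℓ _ => abs_nonneg _
  have hδ0 : 0 ≤ δ := le_min (by positivity) (by positivity)
  have hδ : δ ≤ 1 / 3 := (min_le_left _ _).trans (one_div_three_mul_cast_le k)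
  have hkδ : k * δ ≤ 1 / 3 :=
    (mul_le_mul_of_nonneg_left (min_le_left _ _) k.cast_nonneg).trans
      (cast_mul_one_div_three_mul_le k)
  have hloss : δ * (9 * ρ * k ^ 2) ≤ 2 * B :=
    mul_le_of_le_div₀ (by positivity) (by positivity) (min_le_right _ _)
  obtain ⟨σ, hσ⟩ := exists_valCSP_ge hf hjj hw hW (by positivity : 0 ≤ 2 * δ) (by linarith)
  have hquad := one_add_pow_sub_one_sub_mul_le k (by positivity : 0 ≤ 2 * δ) (by linarith)
  refine ⟨σ, ?_⟩
  nlinarith [mul_le_mul_of_nonneg_left hquad hρ, mul_le_mul_of_nonneg_left hloss hδ0,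
    mul_nonneg hB hδ0]

theorem stmt_14 (k n m : ℕ) (hk : 0 < k)
    (f : (Fin k → Bool) → ℝ) (hf01 : ∀ x, f x = 0 ∨ f x = 1)
    (hfne : ∃ x, f x = 1)
    (jj : Fin m → Fin k → Fin n) (hjj : ∀ i, Function.Injective (jj i))
    (b : Fin m → Fin k → Bool) (w : Fin m → ℝ) (hw : ∀ i, 0 ≤ w i)
    (hW : 0 < ∑ i, w i) :
    ∃ σ : Fin n → Bool,
      valCSP k n m f jj b w σ
        ≥ rho k f + biasB k n m f jj b w *
            min (1 / (3 * (k : ℝ)))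
              (2 * biasB k n m f jj b w / (9 * rho k f * (k : ℝ) ^ 2)) :=
  stmt_14_general k n m f hf01 jj hjj b w hw hW
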